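/- Change-of-variables identity for the admissibility integrand: for φ, ψ ∈ L¹(ℝ², ℍ) ∩ L²(ℝ², ℍ) and any ζ ∈ ℝ² with nonzero coordinates, ∫_{ℝ²} F_Q(conj(φ)ˇ)(A_ξ^{-1}(ζ - ξ)) conj(F_Q(conj(ψ)ˇ)(A_ξ^{-1}(ζ - ξ))) dμ₂(ξ)/|det A_ξ| = ∫_{ℝ²} F_Q(conj(φ))(1 - γ) conj(F_Q(conj(ψ))(1 - γ)) dμ₂(γ)/|det A_γ|, i.e., the left side is independent of ζ and equals C_{φ,ψ}. -/

import Mathlib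

open MeasureTheory Quaternion
noncomputable section

def Qi : ℍ[ℝ] := ⟨0,1,0,0⟩
def Qj : ℍ[ℝ] := ⟨0,0,1,0⟩
def qexp (q : ℍ[ℝ]) : ℍ[ℝ] := NormedSpace.exp q
/-- normalized Lebesgue measure on ℝ² -/
def μ2 : Measure (ℝ × ℝ) := (ENNReal.ofReal (2*Real.pi))⁻¹ • (volume : Measure (ℝ × ℝ))
/-- normalized Lebesgue measure on ℝ⁴ = ℝ²×ℝ² -/
def μ4 : Measure ((ℝ×ℝ) × (ℝ×ℝ)) :=
  ((ENNReal.ofReal (2*Real.pi))^2)⁻¹ • (volume : Measure ((ℝ×ℝ)×(ℝ×ℝ)))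
/-- two-sided quaternion Fourier transform -/
def QFT (f : ℝ×ℝ → ℍ[ℝ]) (u : ℝ×ℝ) : ℍ[ℝ] :=
  ∫ x, qexp (-(x.1*u.1) • Qi) * f x * qexp (-(x.2*u.2) • Qj) ∂μ2
/-- quaternion Stockwell transform with window φ -/
def Stock (φ f : ℝ×ℝ → ℍ[ℝ]) (ξ b : ℝ×ℝ) : ℍ[ℝ] :=
  Real.sqrt |ξ.1*ξ.2| • ∫ x, qexp (-(x.1*ξ.1) • Qi) * f x * qexp (-(x.2*ξ.2) • Qj)
    * star (φ (ξ.1*(x.1-b.1), ξ.2*(x.2-b.2))) ∂μ2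
def L2norm (f : ℝ×ℝ → ℍ[ℝ]) : ℝ := (∫ x, ‖f x‖^2 ∂μ2) ^ (1/2 : ℝ)
def L1L2 (f : ℝ×ℝ → ℍ[ℝ]) : Prop := Integrable f μ2 ∧ MemLp f 2 μ2
/-- hypotheses of the quaternion convolution theorem (commutation conditions) -/
def CommCond (φ : ℝ×ℝ → ℍ[ℝ]) : Prop := ∀ u v y : ℝ,
  QFT φ (u,v) * qexp (-(v*y) • Qj) = qexp (-(v*y) • Qj) * QFT φ (u,v) ∧
  QFT (fun x => Qj * φ x) (u,v) * qexp (-(v*y) • Qj)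
    = Qj * (qexp (-(v*y) • Qj) * QFT φ (u,v))
/-- admissibility constant C_φ -/
def Cphi (φ : ℝ×ℝ → ℍ[ℝ]) : ℝ :=
  ∫ ξ, ‖QFT (fun x => star (φ x)) (1-ξ.1, 1-ξ.2)‖^2 / |ξ.1*ξ.2| ∂μ2


/-- quaternionic admissibility constant C_{φ,ψ} -/
def Cpair (φ ψ : ℝ×ℝ → ℍ[ℝ]) : ℍ[ℝ] :=
  ∫ γ, |γ.1*γ.2|⁻¹ • (QFT (fun x => star (φ x)) (1-γ.1, 1-γ.2)
    * star (QFT (fun x => star (ψ x)) (1-γ.1, 1-γ.2))) ∂μ2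

/-!
Reflecting a function, `x ↦ -x`, reflects its quaternion Fourier transform, `u ↦ -u`, and
`-A_ξ⁻¹(ζ - ξ) = 1 - (ζ₁/ξ₁, ζ₂/ξ₂)`. The substitution `γ = (ζ₁/ξ₁, ζ₂/ξ₂)` is an involution of
`(ℝ ∖ {0})²` with Jacobian `ζ₁ζ₂/(ξ₁ξ₂)²`, so it preserves the measure `dξ / |ξ₁ξ₂|`.
-/

theorem QFT_comp_neg (f : ℝ×ℝ → ℍ[ℝ]) (u : ℝ×ℝ) :
    QFT (fun x => f (-x)) u = QFT f (-u) := by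
  unfold QFT μ2
  rw [integral_smul_measure, integral_smul_measure, ← integral_neg_eq_self
    (fun x : ℝ×ℝ => qexp (-(x.1 * (-u).1) • Qi) * f x * qexp (-(x.2 * (-u).2) • Qj))]
  simp

theorem ae_mem_compl_singleton_prod {α β : Type*} [MeasurableSpace α] [MeasurableSpace β]
    {μ : Measure α} {ν : Measure β} [NullSingletonClass μ] [NullSingletonClass ν] [SFinite ν]
    (a : α) (b : β) : ∀ᵐ p ∂μ.prod ν, p ∈ ({a}ᶜ : Set α) ×ˢ ({b}ᶜ : Set β) :=
  (Measure.quasiMeasurePreserving_fst.ae (compl_mem_ae_iff.2 (measure_singleton a))).and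
    (Measure.quasiMeasurePreserving_snd.ae (compl_mem_ae_iff.2 (measure_singleton b)))

theorem involutive_const_div {c : ℝ} (hc : c ≠ 0) : Function.Involutive (c / · : ℝ → ℝ) :=
  fun _ => div_div_cancel₀ hc

theorem image_const_div_compl_zero {c : ℝ} (hc : c ≠ 0) :
    (c / ·) '' ({0}ᶜ : Set ℝ) = {0}ᶜ := by
  rw [(involutive_const_div hc).image_eq_preimage_symm]
  ext t
  simp [hc]

theorem hasDerivAt_const_div (c : ℝ) {t : ℝ} (ht : t ≠ 0) :
    HasDerivAt (c / ·) (-c / t ^ 2) t := by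
  simpa [div_eq_mul_inv, neg_div] using (hasDerivAt_inv ht).const_mul c

theorem integral_abs_mul_inv_smul_comp_const_div {F : Type*} [NormedAddCommGroup F]
    [NormedSpace ℝ F] (g : ℝ×ℝ → F) {ζ : ℝ×ℝ} (h1 : ζ.1 ≠ 0) (h2 : ζ.2 ≠ 0) :
    ∫ ξ : ℝ×ℝ, |ξ.1 * ξ.2|⁻¹ • g (ζ.1 / ξ.1, ζ.2 / ξ.2) = ∫ γ : ℝ×ℝ, |γ.1 * γ.2|⁻¹ • g γ := by
  set S : Set (ℝ×ℝ) := ({0}ᶜ : Set ℝ) ×ˢ ({0}ᶜ : Set ℝ)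
  set σ : ℝ×ℝ → ℝ×ℝ := Prod.map (ζ.1 / ·) (ζ.2 / ·)
  set σ' : ℝ×ℝ → (ℝ×ℝ) →L[ℝ] (ℝ×ℝ) := fun p =>
    (ContinuousLinearMap.toSpanSingleton ℝ (-ζ.1 / p.1 ^ 2)).prodMap
      (ContinuousLinearMap.toSpanSingleton ℝ (-ζ.2 / p.2 ^ 2))
  have hS : MeasurableSet S :=
    (measurableSet_singleton 0).compl.prod (measurableSet_singleton 0).compl
  have hS_ae : ∀ᵐ p : ℝ×ℝ, p ∈ S := ae_mem_compl_singleton_prod (μ := volume) (ν := volume) 0 0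
  have hσ' : ∀ p ∈ S, HasFDerivWithinAt σ (σ' p) S p := fun p hp =>
    ((hasDerivAt_const_div ζ.1 hp.1).hasFDerivAt.prodMap p
      (hasDerivAt_const_div ζ.2 hp.2).hasFDerivAt).hasFDerivWithinAt
  have hinj : Set.InjOn σ S :=
    ((involutive_const_div h1).prodMap (involutive_const_div h2)).injective.injOn
  have himage : σ '' S = S := by
    rw [Set.prodMap_image_prod, image_const_div_compl_zero h1, image_const_div_compl_zero h2]
  have hjac : ∀ p ∈ S, |(σ' p).det| * |(σ p).1 * (σ p).2|⁻¹ = |p.1 * p.2|⁻¹ := by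
    rintro ⟨x, y⟩ ⟨hx, hy⟩
    simp only [Set.mem_compl_singleton_iff] at hx hy
    have hdet : (σ' (x, y)).det = (-ζ.1 / x ^ 2) * (-ζ.2 / y ^ 2) := by
      simp [σ', ContinuousLinearMap.det, LinearMap.det_prodMap]
    rw [hdet, ← abs_inv, ← abs_mul, ← abs_inv]
    congr 1
    simp only [σ, Prod.map]
    field_simp
  calc ∫ ξ : ℝ×ℝ, |ξ.1 * ξ.2|⁻¹ • g (σ ξ)
      = ∫ ξ in S, |(σ' ξ).det| • (|(σ ξ).1 * (σ ξ).2|⁻¹ • g (σ ξ)) := by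
        conv_lhs => rw [← Measure.restrict_eq_self_of_ae_mem hS_ae]
        refine setIntegral_congr_fun hS fun p hp => ?_
        rw [smul_smul, hjac p hp]
    _ = ∫ γ in σ '' S, |γ.1 * γ.2|⁻¹ • g γ :=
        (integral_image_eq_integral_abs_det_fderiv_smul volume hS hσ' hinj
          fun γ => |γ.1 * γ.2|⁻¹ • g γ).symm
    _ = ∫ γ, |γ.1 * γ.2|⁻¹ • g γ := by
        rw [himage, Measure.restrict_eq_self_of_ae_mem hS_ae]

theorem abs_mul_inv_smul_neg_sub_div {F : Type*} [AddCommGroup F] [Module ℝ F]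
    (K : ℝ×ℝ → F) (ζ ξ : ℝ×ℝ) :
    |ξ.1 * ξ.2|⁻¹ • K (-((ζ.1 - ξ.1) / ξ.1), -((ζ.2 - ξ.2) / ξ.2))
      = |ξ.1 * ξ.2|⁻¹ • K (1 - ζ.1 / ξ.1, 1 - ζ.2 / ξ.2) := by
  -- where a coordinate of `ξ` vanishes the arguments of `K` differ, but the weight is `|0|⁻¹ = 0`
  rcases eq_or_ne ξ.1 0 with h | h₁
  · simp [h]
  rcases eq_or_ne ξ.2 0 with h | h₂
  · simp [h]
  rw [one_sub_div h₁, one_sub_div h₂, ← neg_sub ζ.1, ← neg_sub ζ.2, neg_div, neg_div]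

theorem admissibility_change_of_variables_general (φ ψ : ℝ×ℝ → ℍ[ℝ])
    (ζ : ℝ×ℝ) (h1 : ζ.1 ≠ 0) (h2 : ζ.2 ≠ 0) :
    (∫ ξ, |ξ.1*ξ.2|⁻¹ • (QFT (fun x => star (φ (-x))) ((ζ.1-ξ.1)/ξ.1, (ζ.2-ξ.2)/ξ.2)
        * star (QFT (fun x => star (ψ (-x))) ((ζ.1-ξ.1)/ξ.1, (ζ.2-ξ.2)/ξ.2))) ∂μ2)
      = Cpair φ ψ := by
  let K : ℝ×ℝ → ℍ[ℝ] := fun u => QFT (fun x => star (φ x)) u * star (QFT (fun x => star (ψ x)) u)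
  simp only [QFT_comp_neg (fun x => star (φ x)), QFT_comp_neg (fun x => star (ψ x)), Prod.neg_mk]
  change ∫ ξ, |ξ.1 * ξ.2|⁻¹ • K (-((ζ.1 - ξ.1) / ξ.1), -((ζ.2 - ξ.2) / ξ.2)) ∂μ2
    = ∫ γ, |γ.1 * γ.2|⁻¹ • K (1 - γ.1, 1 - γ.2) ∂μ2
  simp only [abs_mul_inv_smul_neg_sub_div K ζ]
  unfold μ2
  rw [integral_smul_measure, integral_smul_measure,
    integral_abs_mul_inv_smul_comp_const_div (fun γ => K (1 - γ.1, 1 - γ.2)) h1 h2]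

theorem admissibility_change_of_variables (φ ψ : ℝ×ℝ → ℍ[ℝ])
    (hφ : L1L2 φ) (hψ : L1L2 ψ) (ζ : ℝ×ℝ) (h1 : ζ.1 ≠ 0) (h2 : ζ.2 ≠ 0) :
    (∫ ξ, |ξ.1*ξ.2|⁻¹ • (QFT (fun x => star (φ (-x))) ((ζ.1-ξ.1)/ξ.1, (ζ.2-ξ.2)/ξ.2)
        * star (QFT (fun x => star (ψ (-x))) ((ζ.1-ξ.1)/ξ.1, (ζ.2-ξ.2)/ξ.2))) ∂μ2)
      = Cpair φ ψ :=
  admissibility_change_of_variables_general φ ψ ζ h1 h2
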